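/- The integral ∫_{-∞}^{∞} (1 − F(y))·J(F(y)) dy equals I, where I = (1/(γ−α))·[ (γ + αγ − γ² − α)·Q(γ) − (1+α)·∫_{α}^{γ} Q(u) du + 2·∫_{α}^{γ} u·Q(u) du + (2−α)·∫_{1−γ}^{1−α} Q(u) du + (αγ − γ²)·Q(1−γ) − 2·∫_{1−γ}^{1−α} u·Q(u) du ] + ∫_{γ}^{1−γ} Q(u) du + γ·Q(1−γ) + γ·Q(γ) − Q(γ). -/

import Mathlib

/-!
The integrand is `h ∘ F` with `h u = (1 - u) * J u`, which vanishes unless `α < F y < 1 - α`,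
and `h` is a quadratic polynomial on each of `[α, γ]`, `[γ, 1 - γ]`, `[1 - γ, 1 - α]`.
For a `C¹` function `g`, writing `g (F y) = g a + ∫_a^{F y} g'` and applying Fubini on
`{(y, u) : a < u ≤ F y, y ≤ Q b}` (where `u ≤ F y ↔ Q u ≤ y`) gives the integration by parts
`∫_{Q a}^{Q b} g (F y) dy = g b * Q b - g a * Q a - ∫_a^b g' u * Q u du`,
which needs no regularity of `Q`. Summing it over the three pieces gives `I`.
-/

open MeasureTheory intervalIntegral Set

theorem integrable_ite_le_comp {F w : ℝ → ℝ} (hF : Measurable F) (hw : Continuous w)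
    (a b c d : ℝ) :
    Integrable (Function.uncurry fun y u => if u ≤ F y then w u else 0)
      ((volume.restrict (Ioc a b)).prod (volume.restrict (Ioc c d))) := by
  have : IsFiniteMeasure (volume.restrict (Ioc a b)) :=
    isFiniteMeasure_restrict.2 measure_Ioc_lt_top.ne
  have : IsFiniteMeasure (volume.restrict (Ioc c d)) :=
    isFiniteMeasure_restrict.2 measure_Ioc_lt_top.ne
  obtain ⟨C, hC⟩ := isCompact_Icc.exists_bound_of_continuousOn (hw.continuousOn (s := Icc c d))
  refine Integrable.of_bound ?_ (max C 0) ?_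
  · exact (Measurable.ite (measurableSet_le measurable_snd (hF.comp measurable_fst))
      (hw.measurable.comp measurable_snd) measurable_const).aestronglyMeasurable
  rw [Measure.prod_restrict]
  filter_upwards [ae_restrict_mem (measurableSet_Ioc.prod measurableSet_Ioc)] with p hp
  by_cases h : p.2 ≤ F p.1
  · simpa only [Function.uncurry, h, if_true] using
      (hC p.2 (Ioc_subset_Icc_self hp.2)).trans (le_max_left C 0)
  · simp only [Function.uncurry, h, if_false, norm_zero, le_max_right]

section Quantile

variable {F Q : ℝ → ℝ} (hF : StrictMono F) (hFQ : ∀ p ∈ Ioo (0:ℝ) 1, F (Q p) = p)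
include hF hFQ

theorem quantile_le_iff {p : ℝ} (hp : p ∈ Ioo (0:ℝ) 1) {y : ℝ} : Q p ≤ y ↔ p ≤ F y := by
  rw [← hF.le_iff_le, hFQ p hp]

theorem le_quantile_iff {p : ℝ} (hp : p ∈ Ioo (0:ℝ) 1) {y : ℝ} : y ≤ Q p ↔ F y ≤ p := by
  rw [← hF.le_iff_le, hFQ p hp]

theorem quantile_lt_iff {p : ℝ} (hp : p ∈ Ioo (0:ℝ) 1) {y : ℝ} : Q p < y ↔ p < F y := by
  rw [← hF.lt_iff_lt, hFQ p hp]

theorem monotoneOn_quantile : MonotoneOn Q (Ioo 0 1) := fun p hp _ hq hpq =>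
  (quantile_le_iff hF hFQ hp).2 (by rwa [hFQ _ hq])

theorem intervalIntegrable_quantile {a b : ℝ} (ha : a ∈ Ioo (0:ℝ) 1) (hb : b ∈ Ioo (0:ℝ) 1) :
    IntervalIntegrable Q volume a b :=
  ((monotoneOn_quantile hF hFQ).mono (ordConnected_Ioo.uIcc_subset ha hb)).intervalIntegrable

theorem mapsTo_Icc_quantile {a b : ℝ} (ha : a ∈ Ioo (0:ℝ) 1) (hb : b ∈ Ioo (0:ℝ) 1) :
    MapsTo F (Icc (Q a) (Q b)) (Icc a b) := fun _ hy =>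
  ⟨(quantile_le_iff hF hFQ ha).1 hy.1, (le_quantile_iff hF hFQ hb).1 hy.2⟩

theorem integral_integral_comp_eq_integral_mul_quantile_sub {w : ℝ → ℝ} (hw : Continuous w)
    {a b : ℝ} (ha : a ∈ Ioo (0:ℝ) 1) (hb : b ∈ Ioo (0:ℝ) 1) (hab : a ≤ b) :
    ∫ y in Q a..Q b, (∫ u in a..F y, w u) = ∫ u in a..b, w u * (Q b - Q u) := by
  let k : ℝ → ℝ → ℝ := fun y u => if u ≤ F y then w u else 0
  have inner_eq : EqOn (fun y => ∫ u in a..F y, w u) (fun y => ∫ u in Ioc a b, k y u)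
      (Ioc (Q a) (Q b)) := fun y hy => by
    beta_reduce
    have hk : k y = (Iic (F y)).indicator w := by
      funext u; simp [k, indicator_apply]
    rw [hk, setIntegral_indicator measurableSet_Iic, Ioc_inter_Iic,
      min_eq_right ((le_quantile_iff hF hFQ hb).1 hy.2),
      integral_of_le ((quantile_le_iff hF hFQ ha).1 hy.1.le)]
  have outer_eq : EqOn (fun u => ∫ y in Ioc (Q a) (Q b), k y u) (fun u => w u * (Q b - Q u))
      (Ioc a b) := fun u hu => by
    beta_reduce
    have huI : u ∈ Ioo (0:ℝ) 1 := ⟨ha.1.trans hu.1, hu.2.trans_lt hb.2⟩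
    have hk : (fun y => k y u) = (Ici (Q u)).indicator (fun _ => w u) := by
      funext y; simp [k, indicator_apply, quantile_le_iff hF hFQ huI]
    have hQau : Q a < Q u := (quantile_lt_iff hF hFQ ha).2 (by rw [hFQ u huI]; exact hu.1)
    have hIcc : Ioc (Q a) (Q b) ∩ Ici (Q u) = Icc (Q u) (Q b) := by
      ext y
      simp only [mem_inter_iff, mem_Ioc, mem_Ici, mem_Icc]
      grind
    rw [hk, setIntegral_indicator measurableSet_Ici, hIcc, setIntegral_const,
      Real.volume_real_Icc_of_le (monotoneOn_quantile hF hFQ huI hb hu.2), smul_eq_mul, mul_comm]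
  rw [integral_of_le (monotoneOn_quantile hF hFQ ha hb hab), integral_of_le hab,
    setIntegral_congr_fun measurableSet_Ioc inner_eq,
    integral_integral_swap (integrable_ite_le_comp hF.monotone.measurable hw _ _ _ _),
    setIntegral_congr_fun measurableSet_Ioc outer_eq]

theorem integral_comp_eq_sub_integral_deriv_mul_quantile (hFc : Continuous F) {g g' : ℝ → ℝ}
    (hg : ∀ x, HasDerivAt g (g' x) x) (hg' : Continuous g')
    {a b : ℝ} (ha : a ∈ Ioo (0:ℝ) 1) (hb : b ∈ Ioo (0:ℝ) 1) (hab : a ≤ b) :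
    ∫ y in Q a..Q b, g (F y) = g b * Q b - g a * Q a - ∫ u in a..b, g' u * Q u := by
  have ftc : ∀ x, ∫ u in a..x, g' u = g x - g a := fun x =>
    integral_eq_sub_of_hasDerivAt (fun x _ => hg x) (hg'.intervalIntegrable _ _)
  have hgF : ∀ y, g (F y) = g a + ∫ u in a..F y, g' u := fun y => by rw [ftc]; ring
  have hprim : Continuous fun y => ∫ u in a..F y, g' u :=
    (continuous_primitive (fun _ _ => hg'.intervalIntegrable _ _) a).comp hFc
  have hg'Q : IntervalIntegrable (fun u => g' u * Q u) volume a b :=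
    (intervalIntegrable_quantile hF hFQ ha hb).continuousOn_mul hg'.continuousOn
  simp only [hgF]
  rw [integral_add intervalIntegrable_const (hprim.intervalIntegrable _ _),
    intervalIntegral.integral_const,
    integral_integral_comp_eq_integral_mul_quantile_sub hF hFQ hg' ha hb hab]
  simp only [mul_sub]
  rw [integral_sub ((hg'.intervalIntegrable _ _).mul_const _) hg'Q,
    intervalIntegral.integral_mul_const, ftc, smul_eq_mul]
  ring

theorem intervalIntegrable_comp_quantile {f g : ℝ → ℝ} (hFc : Continuous F) (hg : Continuous g)
    {a b : ℝ} (ha : a ∈ Ioo (0:ℝ) 1) (hb : b ∈ Ioo (0:ℝ) 1) (hab : a ≤ b)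
    (hfg : EqOn f g (Icc a b)) :
    IntervalIntegrable (fun y => f (F y)) volume (Q a) (Q b) := by
  refine ((hg.comp hFc).intervalIntegrable _ _).congr fun y hy => ?_
  have hy' : y ∈ Icc (Q a) (Q b) := by
    rw [← uIcc_of_le (monotoneOn_quantile hF hFQ ha hb hab)]; exact uIoc_subset_uIcc hy
  exact (hfg (mapsTo_Icc_quantile hF hFQ ha hb hy')).symm

theorem integral_comp_quantile_of_eqOn_quadratic {f : ℝ → ℝ} (hFc : Continuous F) (p q r : ℝ)
    {a b : ℝ} (ha : a ∈ Ioo (0:ℝ) 1) (hb : b ∈ Ioo (0:ℝ) 1) (hab : a ≤ b)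
    (hf : EqOn f (fun u => p + q * u + r * u ^ 2) (Icc a b)) :
    ∫ y in Q a..Q b, f (F y) = (p + q * b + r * b ^ 2) * Q b - (p + q * a + r * a ^ 2) * Q a
      - q * (∫ u in a..b, Q u) - 2 * r * ∫ u in a..b, u * Q u := by
  have hQ := intervalIntegrable_quantile hF hFQ ha hb
  have hderiv : ∀ x, HasDerivAt (fun u => p + q * u + r * u ^ 2) (q + 2 * r * x) x := fun x =>
    ((((hasDerivAt_id x).const_mul q).const_add p).add
      ((hasDerivAt_pow 2 x).const_mul r)).congr_deriv (by ring)
  rw [integral_congr (g := fun y => p + q * F y + r * F y ^ 2) fun y hy => hf ?_,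
    integral_comp_eq_sub_integral_deriv_mul_quantile hF hFQ hFc hderiv (by fun_prop) ha hb hab]
  · have hQu : IntervalIntegrable (fun u => u * Q u) volume a b :=
      hQ.continuousOn_mul continuousOn_id
    simp only [add_mul, mul_assoc]
    rw [integral_add (hQ.const_mul q) ((hQu.const_mul r).const_mul 2),
      intervalIntegral.integral_const_mul, intervalIntegral.integral_const_mul,
      intervalIntegral.integral_const_mul]
    ring
  · rw [uIcc_of_le (monotoneOn_quantile hF hFQ ha hb hab)] at hy
    exact mapsTo_Icc_quantile hF hFQ ha hb hy

theorem integral_comp_eq_intervalIntegral_quantile {f : ℝ → ℝ} {a b : ℝ}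
    (ha : a ∈ Ioo (0:ℝ) 1) (hb : b ∈ Ioo (0:ℝ) 1) (hab : a ≤ b) (hf : ∀ u ∉ Ioo a b, f u = 0) :
    ∫ y, f (F y) = ∫ y in Q a..Q b, f (F y) := by
  rw [integral_of_le (monotoneOn_quantile hF hFQ ha hb hab),
    setIntegral_eq_integral_of_forall_compl_eq_zero (s := Ioc (Q a) (Q b)) fun y hy =>
      hf _ fun hFy =>
        hy ⟨(quantile_lt_iff hF hFQ ha).2 hFy.1, (le_quantile_iff hF hFQ hb).2 hFy.2.le⟩]

end Quantile

noncomputable def trimWeight (α γ u : ℝ) : ℝ :=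
  if α ≤ u ∧ u < γ then (u - α) / (γ - α)
  else if γ ≤ u ∧ u ≤ 1 - γ then 1
  else if 1 - γ < u ∧ u ≤ 1 - α then (1 - u - α) / (γ - α)
  else 0

section TrimWeight

variable {α γ u : ℝ}

theorem trimWeight_of_mem_Icc_left (hαγ : α < γ) (hγ : γ ≤ 1 / 2) (hu : u ∈ Icc α γ) :
    trimWeight α γ u = (u - α) / (γ - α) := by
  rcases hu.2.lt_or_eq with hu' | rfl
  · rw [trimWeight, if_pos ⟨hu.1, hu'⟩]
  · rw [trimWeight, if_neg (by simp), if_pos ⟨le_rfl, by linarith⟩,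
      div_self (sub_ne_zero.2 hαγ.ne')]

theorem trimWeight_of_mem_Icc_middle (hu : u ∈ Icc γ (1 - γ)) : trimWeight α γ u = 1 := by
  rw [trimWeight, if_neg fun h => by linarith [hu.1, h.2], if_pos ⟨hu.1, hu.2⟩]

theorem trimWeight_of_mem_Icc_right (hαγ : α < γ) (hγ : γ ≤ 1 / 2)
    (hu : u ∈ Icc (1 - γ) (1 - α)) :
    trimWeight α γ u = (1 - u - α) / (γ - α) := by
  have : ¬(α ≤ u ∧ u < γ) := fun h => by linarith [hu.1, h.2]
  rcases hu.1.lt_or_eq with hu' | rfl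
  · rw [trimWeight, if_neg this, if_neg (fun h => by linarith [h.2]), if_pos ⟨hu', hu.2⟩]
  · rw [trimWeight, if_neg this, if_pos ⟨by linarith, le_rfl⟩, eq_comm,
      div_eq_one_iff_eq (sub_ne_zero.2 hαγ.ne')]
    ring

theorem trimWeight_eq_zero (hαγ : α < γ) (hγ : γ ≤ 1 / 2) (hu : u ∉ Ioo α (1 - α)) :
    trimWeight α γ u = 0 := by
  unfold trimWeight
  simp only [mem_Ioo, not_and_or, not_lt] at hu
  split_ifs with h₁ h₂ h₃
  · rw [show u = α by grind, sub_self, zero_div]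
  · grind
  · rw [show u = 1 - α by grind, sub_sub_cancel, sub_self, zero_div]
  · rfl

theorem eqOn_one_sub_mul_trimWeight_left (hαγ : α < γ) (hγ : γ ≤ 1 / 2) :
    EqOn (fun u => (1 - u) * trimWeight α γ u)
      (fun u => -α / (γ - α) + (1 + α) / (γ - α) * u + -1 / (γ - α) * u ^ 2) (Icc α γ) :=
  fun u hu => by
    beta_reduce
    rw [trimWeight_of_mem_Icc_left hαγ hγ hu]
    field_simp [sub_ne_zero.2 hαγ.ne']
    ring

theorem eqOn_one_sub_mul_trimWeight_middle :
    EqOn (fun u => (1 - u) * trimWeight α γ u) (fun u => 1 + -1 * u + 0 * u ^ 2)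
      (Icc γ (1 - γ)) :=
  fun u hu => by
    beta_reduce
    rw [trimWeight_of_mem_Icc_middle hu]
    ring

theorem eqOn_one_sub_mul_trimWeight_right (hαγ : α < γ) (hγ : γ ≤ 1 / 2) :
    EqOn (fun u => (1 - u) * trimWeight α γ u)
      (fun u => (1 - α) / (γ - α) + (α - 2) / (γ - α) * u + 1 / (γ - α) * u ^ 2)
      (Icc (1 - γ) (1 - α)) :=
  fun u hu => by
    beta_reduce
    rw [trimWeight_of_mem_Icc_right hαγ hγ hu]
    field_simp [sub_ne_zero.2 hαγ.ne']
    ring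

end TrimWeight

theorem smoothly_trimmed_I_general
    (α γ : ℝ) (hα : 0 < α) (hαγ : α < γ) (hγ : γ ≤ 1/2)
    (J F Q : ℝ → ℝ)
    (hJ : ∀ u : ℝ, J u =
      if α ≤ u ∧ u < γ then (u - α) / (γ - α)
      else if γ ≤ u ∧ u ≤ 1 - γ then 1
      else if 1 - γ < u ∧ u ≤ 1 - α then (1 - u - α) / (γ - α)
      else 0)
    (hFcont : Continuous F) (hFmono : StrictMono F)
    (hFQ : ∀ p ∈ Set.Ioo (0:ℝ) 1, F (Q p) = p) :
    ∫ y : ℝ, (1 - F y) * J (F y) =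
      (1 / (γ - α)) * ((γ + α * γ - γ^2 - α) * Q γ
          - (1 + α) * (∫ u in α..γ, Q u)
          + 2 * (∫ u in α..γ, u * Q u)
          + (2 - α) * (∫ u in (1 - γ)..(1 - α), Q u)
          + (α * γ - γ^2) * Q (1 - γ)
          - 2 * (∫ u in (1 - γ)..(1 - α), u * Q u))
        + (∫ u in γ..(1 - γ), Q u)
        + γ * Q (1 - γ) + γ * Q γ - Q γ := by
  obtain rfl : J = trimWeight α γ := funext hJ
  have hαI : α ∈ Ioo (0:ℝ) 1 := ⟨hα, by linarith⟩
  have hγI : γ ∈ Ioo (0:ℝ) 1 := ⟨by linarith, by linarith⟩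
  have hγ'I : 1 - γ ∈ Ioo (0:ℝ) 1 := ⟨by linarith, by linarith⟩
  have hα'I : 1 - α ∈ Ioo (0:ℝ) 1 := ⟨by linarith, by linarith⟩
  have h₁ := eqOn_one_sub_mul_trimWeight_left hαγ hγ
  have h₂ := eqOn_one_sub_mul_trimWeight_middle (α := α) (γ := γ)
  have h₃ := eqOn_one_sub_mul_trimWeight_right hαγ hγ
  have hI₁ := intervalIntegrable_comp_quantile hFmono hFQ hFcont (by fun_prop) hαI hγI hαγ.le h₁
  have hI₂ := intervalIntegrable_comp_quantile hFmono hFQ hFcont (by fun_prop) hγI hγ'I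
    (by linarith) h₂
  have hI₃ := intervalIntegrable_comp_quantile hFmono hFQ hFcont (by fun_prop) hγ'I hα'I
    (by linarith) h₃
  rw [integral_comp_eq_intervalIntegral_quantile (f := fun u => (1 - u) * trimWeight α γ u)
      hFmono hFQ hαI hα'I (by linarith) fun u hu => by rw [trimWeight_eq_zero hαγ hγ hu, mul_zero],
    ← integral_add_adjacent_intervals hI₁ (hI₂.trans hI₃),
    ← integral_add_adjacent_intervals hI₂ hI₃,
    integral_comp_quantile_of_eqOn_quadratic hFmono hFQ hFcont _ _ _ hαI hγI hαγ.le h₁,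
    integral_comp_quantile_of_eqOn_quadratic hFmono hFQ hFcont _ _ _ hγI hγ'I (by linarith) h₂,
    integral_comp_quantile_of_eqOn_quadratic hFmono hFQ hFcont _ _ _ hγ'I hα'I (by linarith) h₃]
  field_simp
  ring

theorem smoothly_trimmed_I
    (α γ : ℝ) (hα : 0 < α) (hαγ : α < γ) (hγ : γ ≤ 1/2)
    (J F Q : ℝ → ℝ)
    (hJ : ∀ u : ℝ, J u =
      if α ≤ u ∧ u < γ then (u - α) / (γ - α)
      else if γ ≤ u ∧ u ≤ 1 - γ then 1
      else if 1 - γ < u ∧ u ≤ 1 - α then (1 - u - α) / (γ - α)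
      else 0)
    (hFcont : Continuous F) (hFmono : StrictMono F)
    (hFQ : ∀ p ∈ Set.Ioo (0:ℝ) 1, F (Q p) = p)
    (hQF : ∀ x : ℝ, Q (F x) = x) :
    ∫ y : ℝ, (1 - F y) * J (F y) =
      (1 / (γ - α)) * ((γ + α * γ - γ^2 - α) * Q γ
          - (1 + α) * (∫ u in α..γ, Q u)
          + 2 * (∫ u in α..γ, u * Q u)
          + (2 - α) * (∫ u in (1 - γ)..(1 - α), Q u)
          + (α * γ - γ^2) * Q (1 - γ)
          - 2 * (∫ u in (1 - γ)..(1 - α), u * Q u))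
        + (∫ u in γ..(1 - γ), Q u)
        + γ * Q (1 - γ) + γ * Q γ - Q γ :=
  smoothly_trimmed_I_general α γ hα hαγ hγ J F Q hJ hFcont hFmono hFQ
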